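/- arXiv:1301.1153 — 3 statements merged into one kernel-verified Lean document; each statement's English description precedes it below -/
import Mathlib

section
/- Let v be a gross substitute integer-valued valuation on a finite set Ω and p an integer price vector. Then D*_v(p) is nonempty, all sets in D*_v(p) have the same cardinality, and the basis-exchange property holds: for every D_1, D_2 ∈ D*_v(p) and every j_2 ∈ D_2 \ D_1 there exists j_1 ∈ D_1 \ D_2 such that (D_2 \ {j_2}) ∪ {j_1} ∈ D*_v(p). Hence D*_v(p) is the set of bases of a matroid on Ω. -/
open Finset

noncomputable section

variable {Ω : Type*}

/-- The utility of a set `S` under valuation `v` and price vector `p`. -/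
def util (v : Finset Ω → ℝ) (p : Ω → ℝ) (S : Finset Ω) : ℝ := v S - ∑ j ∈ S, p j

/-- The demand set: all sets maximizing utility. -/
def Demand (v : Finset Ω → ℝ) (p : Ω → ℝ) : Set (Finset Ω) :=
  {S | ∀ T : Finset Ω, util v p T ≤ util v p S}

/-- The minimal demand sets: demand sets all of whose proper subsets have strictly
smaller utility. -/
def DemandMin (v : Finset Ω → ℝ) (p : Ω → ℝ) : Set (Finset Ω) :=
  {S | S ∈ Demand v p ∧ ∀ T : Finset Ω, T ⊂ S → util v p T < util v p S}

/-- The maximum utility of a player. -/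
def maxUtil [Fintype Ω] (v : Finset Ω → ℝ) (p : Ω → ℝ) : ℝ :=
  Finset.univ.sup' Finset.univ_nonempty (util v p)

/-- A valuation: zero on the empty set and monotone under inclusion. -/
def IsValuation (v : Finset Ω → ℝ) : Prop :=
  v ∅ = 0 ∧ ∀ S T : Finset Ω, S ⊆ T → v S ≤ v T

/-- Gross substitutes: if prices (weakly) increase, there is a demanded set containing
all previously demanded items whose price did not change. -/
def GrossSubstitute (v : Finset Ω → ℝ) : Prop :=
  ∀ p q : Ω → ℝ, (∀ j, 0 ≤ p j) → (∀ j, p j ≤ q j) →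
    ∀ S ∈ Demand v p, ∃ S' ∈ Demand v q, ∀ j ∈ S, p j = q j → j ∈ S'

/-- `GGS k M`: the `(k,M)`-truncations of gross substitute valuations. -/
def GGS (k : ℕ) (M : ℝ) (v : Finset Ω → ℝ) : Prop :=
  ∃ g : Finset Ω → ℝ, IsValuation g ∧ GrossSubstitute g ∧
    (∀ S : Finset Ω, S.card < k → v S = g S ∧ g S ≤ M) ∧
    (∀ S : Finset Ω, k ≤ S.card → v S = M ∧ M ≤ g S)

/-- `f_{v,p}(S) = min_{D ∈ D*_v(p)} |D ∩ S|`. -/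
def fMin [DecidableEq Ω] (v : Finset Ω → ℝ) (p : Ω → ℝ) (S : Finset Ω) : ℕ :=
  sInf ((fun D => (D ∩ S).card) '' DemandMin v p)

/-- `f_p(S) = (Σ_i f_{i,p}(S)) − |S|`. -/
def fTot [DecidableEq Ω] {n : ℕ} (v : Fin n → Finset Ω → ℝ) (p : Ω → ℝ) (S : Finset Ω) : ℤ :=
  (∑ i, (fMin (v i) p S : ℤ)) - S.card

/-- The Lyapunov function `L(p) = Σ_i u_{i,p} + Σ_j p(j)`. -/
def Lyap [Fintype Ω] {n : ℕ} (v : Fin n → Finset Ω → ℝ) (p : Ω → ℝ) : ℝ :=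
  (∑ i, maxUtil (v i) p) + ∑ j, p j

/-- An envy-free allocation: pairwise disjoint sets, each demanded by its player. -/
def EnvyFree {n : ℕ} (v : Fin n → Finset Ω → ℝ) (p : Ω → ℝ) (A : Fin n → Finset Ω) : Prop :=
  (∀ i j, i ≠ j → Disjoint (A i) (A j)) ∧ ∀ i, A i ∈ Demand (v i) p

/-- A Walrasian allocation: envy-free, and every unallocated item has price zero. -/
def Walrasian {n : ℕ} (v : Fin n → Finset Ω → ℝ) (p : Ω → ℝ) (A : Fin n → Finset Ω) : Prop :=
  EnvyFree v p A ∧ ∀ x : Ω, (∀ i, x ∉ A i) → p x = 0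

/-- `addInd p S = p + 1_S`: increase the price of every item of `S` by one. -/
def addInd [DecidableEq Ω] (p : Ω → ℝ) (S : Finset Ω) : Ω → ℝ :=
  fun j => p j + if j ∈ S then 1 else 0

/-- An integer price vector. -/
def IsIntVec (p : Ω → ℝ) : Prop := ∀ j, ∃ z : ℤ, p j = z

/-- An integer-valued valuation. -/
def IsIntVal (v : Finset Ω → ℝ) : Prop := ∀ S : Finset Ω, ∃ z : ℤ, v S = z

/-- A small player: every demanded set is a singleton. -/
def SmallPlayer (v : Finset Ω → ℝ) (p : Ω → ℝ) : Prop :=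
  ∀ S ∈ Demand v p, ∃ x, S = {x}

section AuxGS
set_option linter.unusedSectionVars false

variable [Fintype Ω] [DecidableEq Ω]

lemma mem_demand {v : Finset Ω → ℝ} {p : Ω → ℝ} {A : Finset Ω} :
    A ∈ Demand v p ↔ ∀ B : Finset Ω, util v p B ≤ util v p A := Iff.rfl

lemma demand_util_eq {v : Finset Ω → ℝ} {p : Ω → ℝ} {A B : Finset Ω}
    (hA : A ∈ Demand v p) (hB : B ∈ Demand v p) : util v p A = util v p B :=
  le_antisymm (hB A) (hA B)

lemma not_demand_lt {v : Finset Ω → ℝ} {p : Ω → ℝ} {A B : Finset Ω}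
    (hA : A ∈ Demand v p) (hB : B ∉ Demand v p) : util v p B < util v p A := by
  by_contra h
  push_neg at h
  exact hB fun T => le_trans (hA T) h

lemma demand_nonempty (v : Finset Ω → ℝ) (p : Ω → ℝ) : (Demand v p).Nonempty := by
  obtain ⟨S, -, hS⟩ := Finset.exists_max_image (Finset.univ : Finset (Finset Ω)) (util v p)
    ⟨∅, Finset.mem_univ ∅⟩
  exact ⟨S, fun T => hS T (Finset.mem_univ T)⟩

lemma util_int {v : Finset Ω → ℝ} {p : Ω → ℝ} (hint : IsIntVal v) (hpint : IsIntVec p)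
    (A : Finset Ω) : ∃ z : ℤ, util v p A = (z : ℝ) := by
  obtain ⟨z, hz⟩ := hint A
  refine ⟨z - ∑ j ∈ A, (hpint j).choose, ?_⟩
  have hsum : (∑ j ∈ A, p j) = ((∑ j ∈ A, (hpint j).choose : ℤ) : ℝ) := by
    rw [Int.cast_sum]
    exact Finset.sum_congr rfl fun j _ => (hpint j).choose_spec
  rw [util, hz, hsum]
  push_cast
  ring

lemma util_gap {v : Finset Ω → ℝ} {p : Ω → ℝ} (hint : IsIntVal v) (hpint : IsIntVec p)
    {A B : Finset Ω} (h : util v p A < util v p B) : util v p A + 1 ≤ util v p B := by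
  obtain ⟨zA, hzA⟩ := util_int hint hpint A
  obtain ⟨zB, hzB⟩ := util_int hint hpint B
  rw [hzA, hzB] at h ⊢
  have : zA < zB := by exact_mod_cast h
  have : zA + 1 ≤ zB := this
  exact_mod_cast this

/-- The key consequence of gross substitutes used throughout: for integer-valued data,
given nonnegative integer weights `w ≤ w'`, if `S` is demanded and minimizes the
`w`-weight among demanded sets, then there is a demanded set `A` minimizing the
`w'`-weight among demanded sets that contains all elements of `S` whose weight
did not change. -/
lemma gsmin2 {v : Finset Ω → ℝ} {p : Ω → ℝ}
    (hgs : GrossSubstitute v) (hint : IsIntVal v) (hpint : IsIntVec p)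
    (hp : ∀ j, 0 ≤ p j)
    (w w' : Ω → ℕ) (hww : ∀ j, w j ≤ w' j) (S : Finset Ω) (hS : S ∈ Demand v p)
    (hSmin : ∀ B ∈ Demand v p, ∑ j ∈ S, w j ≤ ∑ j ∈ B, w j) :
    ∃ A ∈ Demand v p, (∀ B ∈ Demand v p, ∑ j ∈ A, w' j ≤ ∑ j ∈ B, w' j) ∧
      ∀ j ∈ S, w j = w' j → j ∈ A := by
  set M : ℝ := ∑ j : Ω, (w' j : ℝ) with hM
  have hM0 : 0 ≤ M := Finset.sum_nonneg fun _ _ => Nat.cast_nonneg _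
  set c : ℝ := (1 + M)⁻¹ with hc
  have hc0 : 0 < c := inv_pos.2 (by linarith)
  have hsum_le : ∀ (u : Ω → ℕ), (∀ j, u j ≤ w' j) → ∀ A : Finset Ω,
      c * ∑ j ∈ A, (u j : ℝ) < 1 := by
    intro u hu A
    have h1 : ∑ j ∈ A, (u j : ℝ) ≤ M := by
      calc ∑ j ∈ A, (u j : ℝ) ≤ ∑ j ∈ A, (w' j : ℝ) :=
            Finset.sum_le_sum fun j _ => by exact_mod_cast hu j
        _ ≤ M := Finset.sum_le_sum_of_subset_of_nonneg (Finset.subset_univ A)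
            (fun _ _ _ => Nat.cast_nonneg _)
    have h2 : c * ∑ j ∈ A, (u j : ℝ) ≤ c * M := by
      exact mul_le_mul_of_nonneg_left h1 hc0.le
    have h3 : c * M < c * (1 + M) := by nlinarith
    have h4 : c * (1 + M) = 1 := inv_mul_cancel₀ (by linarith)
    linarith
  have hsnn : ∀ (u : Ω → ℕ) (A : Finset Ω), (0:ℝ) ≤ c * ∑ j ∈ A, (u j : ℝ) :=
    fun u A => mul_nonneg hc0.le (Finset.sum_nonneg fun _ _ => Nat.cast_nonneg _)
  set q : Ω → ℝ := fun j => p j + c * w j with hq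
  set q' : Ω → ℝ := fun j => p j + c * w' j with hq'
  have hutilq : ∀ A, util v q A = util v p A - c * ∑ j ∈ A, (w j : ℝ) := by
    intro A
    simp only [util, hq, Finset.sum_add_distrib, ← Finset.mul_sum]
    ring
  have hutilq' : ∀ A, util v q' A = util v p A - c * ∑ j ∈ A, (w' j : ℝ) := by
    intro A
    simp only [util, hq', Finset.sum_add_distrib, ← Finset.mul_sum]
    ring
  have hq0 : ∀ j, 0 ≤ q j :=
    fun j => add_nonneg (hp j) (mul_nonneg hc0.le (Nat.cast_nonneg _))
  have hqq' : ∀ j, q j ≤ q' j := by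
    intro j
    have h1 : (w j : ℝ) ≤ (w' j : ℝ) := by exact_mod_cast hww j
    have := mul_le_mul_of_nonneg_left h1 hc0.le
    simp only [hq, hq']
    linarith
  have hSq : S ∈ Demand v q := by
    rw [mem_demand]
    intro B
    rw [hutilq, hutilq]
    by_cases hB : B ∈ Demand v p
    · have he : util v p B = util v p S := demand_util_eq hB hS
      have hw : (∑ j ∈ S, (w j : ℝ)) ≤ ∑ j ∈ B, (w j : ℝ) := by
        exact_mod_cast hSmin B hB
      have := mul_le_mul_of_nonneg_left hw hc0.le
      linarith
    · have hlt : util v p B < util v p S := not_demand_lt hS hB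
      have h1 := util_gap hint hpint hlt
      have h2 := hsnn w B
      have h3 := hsum_le w hww S
      linarith
  obtain ⟨A, hAq', hsub⟩ := hgs q q' hq0 hqq' S hSq
  have hAp : A ∈ Demand v p := by
    rw [mem_demand]
    intro B
    have h := hAq' B
    rw [hutilq', hutilq'] at h
    by_contra hlt
    push_neg at hlt
    have h1 := util_gap hint hpint hlt
    have h2 := hsnn w' A
    have h3 := hsum_le w' (fun j => le_rfl) B
    linarith
  refine ⟨A, hAp, ?_, ?_⟩
  · intro B hB
    have h := hAq' B
    rw [hutilq', hutilq'] at h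
    have he : util v p B = util v p A := demand_util_eq hB hAp
    have h2 : c * (∑ j ∈ A, (w' j : ℝ)) ≤ c * ∑ j ∈ B, (w' j : ℝ) := by linarith
    have h3 : (∑ j ∈ A, (w' j : ℝ)) ≤ ∑ j ∈ B, (w' j : ℝ) :=
      le_of_mul_le_mul_left h2 hc0
    exact_mod_cast h3
  · intro j hj hwj
    exact hsub j hj (by simp only [hq, hq', hwj])

lemma exch_aux {v : Finset Ω → ℝ} {p : Ω → ℝ}
    (hgs : GrossSubstitute v) (hint : IsIntVal v) (hpint : IsIntVec p)
    (hp : ∀ j, 0 ≤ p j)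
    (S T : Finset Ω) (hS : S ∈ Demand v p) (hT : T ∈ Demand v p)
    (x : Ω) (hxS : x ∈ S) (hxT : x ∉ T) :
    ∃ A ∈ Demand v p, S.erase x ⊆ A ∧ A ⊆ S ∪ T ∧ x ∉ A ∧
      ∀ B ∈ Demand v p, B ⊆ S ∪ T → x ∉ B → (A \ S).card ≤ (B \ S).card := by
  set W : ℕ := Fintype.card Ω + 1 with hW
  set w' : Ω → ℕ := fun j =>
    if j ∈ S ∪ T then (if j = x then W else if j ∈ S then 0 else 1) else W * W with hw'
  have hsum : ∀ C : Finset Ω, C ⊆ S ∪ T → x ∉ C → (∑ j ∈ C, w' j) = (C \ S).card := by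
    intro C hC hxC
    rw [Finset.sdiff_eq_filter, Finset.card_filter]
    apply Finset.sum_congr rfl
    intro j hj
    have h1 : j ∈ S ∪ T := hC hj
    have h2 : j ≠ x := fun h => hxC (h ▸ hj)
    simp only [hw', if_pos h1, if_neg h2]
    by_cases hjS : j ∈ S <;> simp [hjS]
  obtain ⟨A, hA, hAmin, hAsub⟩ := gsmin2 hgs hint hpint hp (fun _ => 0) w'
    (fun j => Nat.zero_le _) S hS (fun B _ => by simp)
  have hTsum : (∑ j ∈ T, w' j) = (T \ S).card :=
    hsum T Finset.subset_union_right hxT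
  have hAle : ∑ j ∈ A, w' j ≤ (T \ S).card := by
    rw [← hTsum]; exact hAmin T hT
  have hcard : (T \ S).card < W := by
    have := Finset.card_le_univ (T \ S)
    simp only [hW]
    omega
  have hAST : A ⊆ S ∪ T := by
    intro j hj
    by_contra hout
    have h1 : w' j = W * W := by simp only [hw', if_neg hout]
    have h2 := Finset.single_le_sum (f := w') (fun i _ => Nat.zero_le _) hj
    have h3 : W ≤ W * W := Nat.le_mul_of_pos_left W (by omega)
    omega
  have hxA : x ∉ A := by
    intro hxA
    have h1 : w' x = W := by
      simp [hw', hxS]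
    have h2 := Finset.single_le_sum (f := w') (fun i _ => Nat.zero_le _) hxA
    omega
  refine ⟨A, hA, ?_, hAST, hxA, ?_⟩
  · intro j hj
    obtain ⟨hjx, hjS⟩ := Finset.mem_erase.1 hj
    refine hAsub j hjS ?_
    simp only [hw', if_pos (Finset.mem_union_left T hjS), if_neg hjx, if_pos hjS]
  · intro B hB hBsub hxB
    rw [← hsum A hAST hxA, ← hsum B hBsub hxB]
    exact hAmin B hB
lemma exc1 {v : Finset Ω → ℝ} {p : Ω → ℝ}
    (hgs : GrossSubstitute v) (hint : IsIntVal v) (hpint : IsIntVec p)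
    (hp : ∀ j, 0 ≤ p j) :
    ∀ (t : ℕ) (S T : Finset Ω), S ∈ Demand v p → T ∈ Demand v p →
      ∀ x, x ∈ S → x ∉ T → (T \ S).card = t →
      S.erase x ∈ Demand v p ∨
        ∃ y, y ∈ T ∧ y ∉ S ∧ insert y (S.erase x) ∈ Demand v p := by
  intro t
  induction t using Nat.strong_induction_on with
  | _ t IH =>
  intro S T hS hT x hxS hxT ht
  obtain ⟨A₀, hA₀, hA₀e, hA₀sub, hxA₀, hA₀min⟩ :=
    exch_aux hgs hint hpint hp S T hS hT x hxS hxT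
  have hA₀S : A₀ \ S ⊆ T \ S := by
    intro j hj
    obtain ⟨hj1, hj2⟩ := Finset.mem_sdiff.1 hj
    rcases Finset.mem_union.1 (hA₀sub hj1) with h | h
    · exact absurd h hj2
    · exact Finset.mem_sdiff.2 ⟨h, hj2⟩
  by_cases hm0 : (A₀ \ S).card = 0
  · left
    have h1 : A₀ ⊆ S := Finset.sdiff_eq_empty_iff_subset.1 (Finset.card_eq_zero.1 hm0)
    have h2 : A₀ = S.erase x := by
      apply Finset.Subset.antisymm
      · intro j hj
        exact Finset.mem_erase.2 ⟨fun h => hxA₀ (h ▸ hj), h1 hj⟩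
      · exact hA₀e
    rwa [h2] at hA₀
  by_cases hm1 : (A₀ \ S).card = 1
  · right
    obtain ⟨y, hy⟩ := Finset.card_eq_one.1 hm1
    have hyA₀ : y ∈ A₀ \ S := hy ▸ Finset.mem_singleton_self y
    obtain ⟨hy1, hy2⟩ := Finset.mem_sdiff.1 hyA₀
    have hyT : y ∈ T := (Finset.mem_sdiff.1 (hA₀S hyA₀)).1
    refine ⟨y, hyT, hy2, ?_⟩
    have heq : insert y (S.erase x) = A₀ := by
      apply Finset.Subset.antisymm
      · exact Finset.insert_subset hy1 hA₀e
      · intro j hj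
        by_cases hjS : j ∈ S
        · exact Finset.mem_insert_of_mem (Finset.mem_erase.2 ⟨fun h => hxA₀ (h ▸ hj), hjS⟩)
        · have hj' : j ∈ A₀ \ S := Finset.mem_sdiff.2 ⟨hj, hjS⟩
          rw [hy] at hj'
          exact Finset.mem_insert.2 (Or.inl (Finset.mem_singleton.1 hj'))
    rwa [heq]
  have hm2 : 2 ≤ (A₀ \ S).card := by omega
  have hmt : (A₀ \ S).card ≤ t := by
    rw [← ht]
    exact hA₀min T hT Finset.subset_union_right hxT
  rcases lt_or_eq_of_le hmt with hlt | heq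
  · rcases IH (A₀ \ S).card hlt S A₀ hS hA₀ x hxS hxA₀ rfl with h | ⟨y, hy1, hy2, hy3⟩
    · exact Or.inl h
    · exact Or.inr ⟨y, (Finset.mem_sdiff.1 (hA₀S (Finset.mem_sdiff.2 ⟨hy1, hy2⟩))).1, hy2, hy3⟩
  exfalso
  have hfull : ∀ B ∈ Demand v p, B ⊆ S ∪ T → x ∉ B → T \ S ⊆ B := by
    intro B hB hBsub hxB
    have h1 : (A₀ \ S).card ≤ (B \ S).card := hA₀min B hB hBsub hxB
    have h2 : B \ S ⊆ T \ S := by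
      intro j hj
      obtain ⟨hj1, hj2⟩ := Finset.mem_sdiff.1 hj
      rcases Finset.mem_union.1 (hBsub hj1) with h | h
      · exact absurd h hj2
      · exact Finset.mem_sdiff.2 ⟨h, hj2⟩
    have h3 : B \ S = T \ S := Finset.eq_of_subset_of_card_le h2 (by omega)
    intro j hj
    exact (Finset.mem_sdiff.1 (h3 ▸ hj)).1
  obtain ⟨y, hyTS⟩ : (T \ S).Nonempty := Finset.card_pos.1 (by omega)
  obtain ⟨hyT, hyS⟩ := Finset.mem_sdiff.1 hyTS
  have hxy : x ≠ y := fun h => hyS (h ▸ hxS)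
  set W : ℕ := Fintype.card Ω + 1 with hW
  set w₁ : Ω → ℕ := fun j =>
    if j ∈ S ∪ T then (if j = x ∨ j = y then W else 0) else W * W with hw₁
  set w₂ : Ω → ℕ := fun j =>
    if j ∈ S ∪ T then (if j = x ∨ j = y then W else if j ∈ T ∧ j ∉ S then 1 else 0)
    else W * W with hw₂
  have hww : ∀ j, w₁ j ≤ w₂ j := by
    intro j
    simp only [hw₁, hw₂]
    split_ifs <;> simp
  have hT₁ : ∑ j ∈ T, w₁ j = W := by
    rw [Finset.sum_eq_single y]
    · simp [hw₁, hyT]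
    · intro b hb hby
      have hbx : b ≠ x := fun h => hxT (h ▸ hb)
      simp [hw₁, hb, hbx, hby]
    · intro h; exact absurd hyT h
  have hS₂ : ∑ j ∈ S, w₂ j = W := by
    rw [Finset.sum_eq_single x]
    · simp [hw₂, hxS]
    · intro b hb hbx
      have hby : b ≠ y := fun h => hyS (h ▸ hb)
      simp [hw₂, hb, hbx, hby]
    · intro h; exact absurd hxS h
  have hT₁min : ∀ B ∈ Demand v p, ∑ j ∈ T, w₁ j ≤ ∑ j ∈ B, w₁ j := by
    intro B hB
    rw [hT₁]
    by_cases hBsub : B ⊆ S ∪ T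
    · by_cases hxB : x ∈ B
      · have h1 : w₁ x = W := by simp [hw₁, hxS]
        have h2 := Finset.single_le_sum (f := w₁) (fun i _ => Nat.zero_le _) hxB
        omega
      · have hyB : y ∈ B := hfull B hB hBsub hxB hyTS
        have h1 : w₁ y = W := by simp [hw₁, hyT]
        have h2 := Finset.single_le_sum (f := w₁) (fun i _ => Nat.zero_le _) hyB
        omega
    · obtain ⟨j, hjB, hjout⟩ := Finset.not_subset.1 hBsub
      have h1 : w₁ j = W * W := by simp only [hw₁]; rw [if_neg hjout]
      have h2 := Finset.single_le_sum (f := w₁) (fun i _ => Nat.zero_le _) hjB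
      have h3 : W ≤ W * W := Nat.le_mul_of_pos_left W (by omega)
      omega
  obtain ⟨A, hA, hAmin, hAsub⟩ := gsmin2 hgs hint hpint hp w₁ w₂ hww T hT hT₁min
  have hyA : y ∈ A := by
    refine hAsub y hyT ?_
    simp [hw₁, hw₂, hyT]
  have hAle : ∑ j ∈ A, w₂ j ≤ W := by rw [← hS₂]; exact hAmin S hS
  have hy₂ : w₂ y = W := by simp [hw₂, hyT]
  have hcardW : 2 ≤ Fintype.card Ω := by
    have h1 := Finset.card_le_univ (T \ S)
    omega
  have hAST : A ⊆ S ∪ T := by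
    intro j hj
    by_contra hout
    have h1 : w₂ j = W * W := by simp only [hw₂]; rw [if_neg hout]
    have h2 := Finset.single_le_sum (f := w₂) (fun i _ => Nat.zero_le _) hj
    have h3 : 2 * W ≤ W * W := Nat.mul_le_mul_right W (by omega)
    omega
  have hpair : ∀ j ∈ A, j ≠ y → w₂ j + W ≤ W := by
    intro j hj hjy
    have hsub2 : {j, y} ⊆ A := Finset.insert_subset hj (Finset.singleton_subset_iff.2 hyA)
    have h1 : ∑ i ∈ ({j, y} : Finset Ω), w₂ i = w₂ j + w₂ y := Finset.sum_pair hjy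
    have h2 : ∑ i ∈ ({j, y} : Finset Ω), w₂ i ≤ ∑ i ∈ A, w₂ i :=
      Finset.sum_le_sum_of_subset hsub2
    omega
  have hxA : x ∉ A := by
    intro hxA
    have h1 : w₂ x = W := by simp [hw₂, hxS]
    have h2 := hpair x hxA hxy
    omega
  have hAy : A \ S ⊆ {y} := by
    intro j hj
    obtain ⟨hj1, hj2⟩ := Finset.mem_sdiff.1 hj
    rw [Finset.mem_singleton]
    by_contra hjy
    have hjT : j ∈ T := by
      rcases Finset.mem_union.1 (hAST hj1) with h | h
      · exact absurd h hj2
      · exact h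
    have hjx : j ≠ x := fun h => hxA (h ▸ hj1)
    have h1 : w₂ j = 1 := by simp [hw₂, hjT, hjx, hjy, hj2]
    have h2 := hpair j hj1 hjy
    omega
  have hfin : (A₀ \ S).card ≤ (A \ S).card := hA₀min A hA hAST hxA
  have hone : (A \ S).card ≤ 1 := le_trans (Finset.card_le_card hAy) (by simp)
  omega
lemma demandMin_iff {v : Finset Ω → ℝ} {p : Ω → ℝ} {A : Finset Ω} :
    A ∈ DemandMin v p ↔ A ∈ Demand v p ∧ ∀ B : Finset Ω, B ⊂ A → B ∉ Demand v p := by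
  constructor
  · rintro ⟨h1, h2⟩
    refine ⟨h1, fun B hB hBD => ?_⟩
    exact absurd (demand_util_eq hBD h1) (ne_of_lt (h2 B hB))
  · rintro ⟨h1, h2⟩
    exact ⟨h1, fun B hB => not_demand_lt h1 (h2 B hB)⟩

lemma min_card_le {v : Finset Ω → ℝ} {p : Ω → ℝ}
    (hgs : GrossSubstitute v) (hint : IsIntVal v) (hpint : IsIntVec p)
    (hp : ∀ j, 0 ≤ p j) :
    ∀ (r : ℕ) (D B : Finset Ω), D ∈ Demand v p → B ∈ DemandMin v p →
      (D \ B).card ≤ r → B.card ≤ D.card := by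
  have sub_case : ∀ D B : Finset Ω, D ∈ Demand v p → B ∈ DemandMin v p →
      D ⊆ B → B.card ≤ D.card := by
    intro D B hD hB h1
    by_cases h2 : D = B
    · exact h2 ▸ le_rfl
    · exact absurd hD ((demandMin_iff.1 hB).2 D (Finset.ssubset_iff_subset_ne.2 ⟨h1, h2⟩))
  intro r
  induction r with
  | zero =>
    intro D B hD hB h
    exact sub_case D B hD hB
      (Finset.sdiff_eq_empty_iff_subset.1 (Finset.card_eq_zero.1 (Nat.le_zero.1 h)))
  | succ n IHn =>
    intro D B hD hB h
    by_cases hDB : D ⊆ B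
    · exact sub_case D B hD hB hDB
    · obtain ⟨x, hxD, hxB⟩ := Finset.not_subset.1 hDB
      have hxDB : x ∈ D \ B := Finset.mem_sdiff.2 ⟨hxD, hxB⟩
      have hcard : ((D \ B).erase x).card ≤ n := by
        have := Finset.card_erase_of_mem hxDB
        omega
      rcases exc1 hgs hint hpint hp (B \ D).card D B hD (demandMin_iff.1 hB).1
        x hxD hxB rfl with hDe | ⟨y, hyB, hyD, hE⟩
      · have h2 : (D.erase x) \ B = (D \ B).erase x := Finset.erase_sdiff_comm D B x
        have h3 := IHn (D.erase x) B hDe hB (by rw [h2]; exact hcard)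
        exact le_trans h3 (Finset.card_le_card (Finset.erase_subset x D))
      · have h2 : (insert y (D.erase x)) \ B = (D \ B).erase x := by
          rw [Finset.insert_sdiff_of_mem _ hyB]
          exact Finset.erase_sdiff_comm D B x
        have h3 := IHn (insert y (D.erase x)) B hE hB (by rw [h2]; exact hcard)
        have h4 : (insert y (D.erase x)).card = D.card := by
          rw [Finset.card_insert_of_notMem (fun hh => hyD (Finset.mem_of_mem_erase hh)),
            Finset.card_erase_of_mem hxD]
          have : 1 ≤ D.card := Finset.card_pos.2 ⟨x, hxD⟩
          omega
        omega
end AuxGS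
/-- for a gross substitute integer valuation and integer prices, the minimal
demand sets are nonempty, equicardinal, and satisfy the matroid basis-exchange property. -/
theorem gs_demandMin_matroid {Ω : Type*} [Fintype Ω] [DecidableEq Ω]
    (v : Finset Ω → ℝ) (hval : IsValuation v) (hgs : GrossSubstitute v)
    (hint : IsIntVal v)
    (p : Ω → ℝ) (hp : ∀ j, 0 ≤ p j) (hpint : IsIntVec p) :
    (DemandMin v p).Nonempty ∧
    (∀ D₁ ∈ DemandMin v p, ∀ D₂ ∈ DemandMin v p, D₁.card = D₂.card) ∧
    (∀ D₁ ∈ DemandMin v p, ∀ D₂ ∈ DemandMin v p, ∀ j₂ ∈ D₂ \ D₁,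
      ∃ j₁ ∈ D₁ \ D₂, insert j₁ (D₂.erase j₂) ∈ DemandMin v p) := by
  classical
  obtain ⟨D₀, hD₀⟩ := demand_nonempty v p
  obtain ⟨B, hBs, hBmin⟩ := Finset.exists_min_image
    (Finset.univ.filter fun A => A ∈ Demand v p) Finset.card
    ⟨D₀, Finset.mem_filter.2 ⟨Finset.mem_univ _, hD₀⟩⟩
  have hBD : B ∈ Demand v p := (Finset.mem_filter.1 hBs).2
  have hBMin : B ∈ DemandMin v p := by
    rw [demandMin_iff]
    refine ⟨hBD, fun C hC hCD => ?_⟩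
    have h1 := hBmin C (Finset.mem_filter.2 ⟨Finset.mem_univ _, hCD⟩)
    have h2 := Finset.card_lt_card hC
    omega
  have key : ∀ D ∈ Demand v p, ∀ B' ∈ DemandMin v p, B'.card ≤ D.card := by
    intro D hD B' hB'
    exact min_card_le hgs hint hpint hp (D \ B').card D B' hD hB' le_rfl
  refine ⟨⟨B, hBMin⟩, ?_, ?_⟩
  · intro D₁ h₁ D₂ h₂
    exact le_antisymm (key D₂ (demandMin_iff.1 h₂).1 D₁ h₁)
      (key D₁ (demandMin_iff.1 h₁).1 D₂ h₂)
  · intro D₁ h₁ D₂ h₂ j₂ hj₂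
    obtain ⟨hj₂D₂, hj₂D₁⟩ := Finset.mem_sdiff.1 hj₂
    rcases exc1 hgs hint hpint hp (D₁ \ D₂).card D₂ D₁ (demandMin_iff.1 h₂).1
      (demandMin_iff.1 h₁).1 j₂ hj₂D₂ hj₂D₁ rfl with h | ⟨j₁, hj₁D₁, hj₁D₂, hE⟩
    · exact absurd h ((demandMin_iff.1 h₂).2 (D₂.erase j₂) (Finset.erase_ssubset hj₂D₂))
    · refine ⟨j₁, Finset.mem_sdiff.2 ⟨hj₁D₁, hj₁D₂⟩, ?_⟩
      rw [demandMin_iff]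
      refine ⟨hE, fun C hC hCD => ?_⟩
      have h1 : D₂.card ≤ C.card := key C hCD D₂ h₂
      have h2 := Finset.card_lt_card hC
      have h3 : (insert j₁ (D₂.erase j₂)).card = D₂.card := by
        rw [Finset.card_insert_of_notMem (fun hh => hj₁D₂ (Finset.mem_of_mem_erase hh)),
          Finset.card_erase_of_mem hj₂D₂]
        have : 1 ≤ D₂.card := Finset.card_pos.2 ⟨j₂, hj₂D₂⟩
        omega
      omega
end
end

section
/- Let v_1,…,v_n be arbitrary valuations on a finite set Ω and p a price vector. If there exists a set S ⊆ Ω with f_p(S) > 0, then there is no envy-free allocation with respect to p, i.e., there are no pairwise disjoint sets S_1,…,S_n ⊆ Ω with S_i ∈ D_i(p) for every i. -/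
open Finset

noncomputable section

variable {Ω : Type*}

lemma exists_demandMin_subset (v : Finset Ω → ℝ) (p : Ω → ℝ) :
    ∀ A : Finset Ω, A ∈ Demand v p → ∃ D ∈ DemandMin v p, D ⊆ A := by
  intro A
  induction A using Finset.strongInductionOn with
  | _ A ih =>
    intro hA
    by_cases h : ∀ T : Finset Ω, T ⊂ A → util v p T < util v p A
    · exact ⟨A, ⟨hA, h⟩, subset_rfl⟩
    · push_neg at h
      obtain ⟨T, hT, hle⟩ := h
      have hTd : T ∈ Demand v p := fun U => le_trans (hA U) hle
      obtain ⟨Dm, hD, hsub⟩ := ih T hT hTd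
      exact ⟨Dm, hD, hsub.trans hT.subset⟩

/-- if `f_p(S) > 0` for some set `S`, then there is no envy-free allocation. -/
theorem no_envy_free_of_overdemanded {Ω : Type*} [Fintype Ω] [DecidableEq Ω] {n : ℕ}
    (v : Fin n → Finset Ω → ℝ) (hval : ∀ i, IsValuation (v i))
    (p : Ω → ℝ) (hp : ∀ j, 0 ≤ p j)
    (S : Finset Ω) (hS : 0 < fTot v p S) :
    ¬ ∃ A : Fin n → Finset Ω, EnvyFree v p A := by
  rintro ⟨A, hdisj, hdem⟩
  choose D hDmem hDsub using fun i => exists_demandMin_subset (v i) p (A i) (hdem i)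
  have h1 : ∀ i, fMin (v i) p S ≤ (A i ∩ S).card := by
    intro i
    refine le_trans (Nat.sInf_le ⟨D i, hDmem i, rfl⟩) ?_
    exact Finset.card_le_card (Finset.inter_subset_inter (hDsub i) le_rfl)
  have h2 : ∑ i, (A i ∩ S).card ≤ S.card := by
    rw [← Finset.card_biUnion]
    · exact Finset.card_le_card (Finset.biUnion_subset.2 fun i _ => Finset.inter_subset_right)
    · intro i _ j _ hij
      exact Finset.disjoint_of_subset_left Finset.inter_subset_left
        (Finset.disjoint_of_subset_right Finset.inter_subset_left (hdisj i j hij))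
  have h3 : ∑ i, fMin (v i) p S ≤ S.card := le_trans (Finset.sum_le_sum fun i _ => h1 i) h2
  have h4 : (∑ i, (fMin (v i) p S : ℤ)) ≤ (S.card : ℤ) := by exact_mod_cast h3
  unfold fTot at hS
  omega
end
end

section
/- Let v_1,…,v_n be gross substitute integer-valued valuations on a finite set Ω, let p* be an optimal price vector (a minimizer of the Lyapunov function L over all integer price vectors), and let p ≤ p* be an integer price vector. Suppose O* ⊆ Ω satisfies: f_p(O*) ≥ f_p(S) for every S ⊆ Ω, f_p(T) < f_p(O*) for every proper subset T ⊊ O*, and f_p(O*) > 0. Then p + 1_{O*} ≤ p*. (Hence the Gul–Stacchetti ascending auction started at the zero price vector never raises any item's price above an optimal price vector.) -/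
open Finset

noncomputable section

variable {Ω : Type*}

set_option linter.unusedSectionVars false

namespace GSAux

variable {Ω : Type*} [Fintype Ω] [DecidableEq Ω]

/-- bump prices on `T` by `c`. -/
def bump (p : Ω → ℝ) (T : Finset Ω) (c : ℝ) : Ω → ℝ :=
  fun j => p j + if j ∈ T then c else 0

lemma addInd_eq_bump (p : Ω → ℝ) (S : Finset Ω) : addInd p S = bump p S 1 := rfl

lemma bump_empty (p : Ω → ℝ) (c : ℝ) : bump p ∅ c = p := by
  funext j; simp [bump]

lemma bump_nonneg {p : Ω → ℝ} (hp : ∀ j, 0 ≤ p j) {T : Finset Ω} {c : ℝ} (hc : 0 ≤ c) :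
    ∀ j, 0 ≤ bump p T c j := by
  intro j; unfold bump
  by_cases h : j ∈ T <;> simp [h]
  · have := hp j; linarith
  · exact hp j

lemma bump_le (p : Ω → ℝ) (T : Finset Ω) {c : ℝ} (hc : 0 ≤ c) :
    ∀ j, p j ≤ bump p T c j := by
  intro j; unfold bump
  by_cases h : j ∈ T <;> simp [h]; exact hc

lemma bump_int {p : Ω → ℝ} (hp : IsIntVec p) {T : Finset Ω} {c : ℝ} (hc : ∃ z : ℤ, c = z) :
    IsIntVec (bump p T c) := by
  intro j
  obtain ⟨z, hz⟩ := hp j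
  obtain ⟨w, hw⟩ := hc
  by_cases h : j ∈ T
  · exact ⟨z + w, by simp [bump, h, hz, hw]⟩
  · exact ⟨z, by simp [bump, h, hz]⟩

lemma bump_comm (p : Ω → ℝ) (S S' : Finset Ω) (c c' : ℝ) :
    bump (bump p S c) S' c' = bump (bump p S' c') S c := by
  funext j; unfold bump; ring

lemma bump_insert (p : Ω → ℝ) {b : Ω} {T : Finset Ω} (hb : b ∉ T) :
    bump p (insert b T) (1 : ℝ) = bump (bump p T 1) {b} 1 := by
  funext j
  unfold bump
  by_cases hj : j = b
  · subst hj; simp [hb]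
  · by_cases hjT : j ∈ T <;> simp [hj, hjT]

lemma bump_union (p : Ω → ℝ) {S₁ S₂ : Finset Ω} (h : Disjoint S₁ S₂) :
    bump p (S₁ ∪ S₂) (1 : ℝ) = bump (bump p S₁ 1) S₂ 1 := by
  funext j
  unfold bump
  by_cases h1 : j ∈ S₁
  · have h2 : j ∉ S₂ := Finset.disjoint_left.mp h h1
    simp [h1, h2]
  · by_cases h2 : j ∈ S₂ <;> simp [h1, h2]

lemma util_bump (v : Finset Ω → ℝ) (p : Ω → ℝ) (T : Finset Ω) (c : ℝ) (X : Finset Ω) :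
    util v (bump p T c) X = util v p X - c * (X ∩ T).card := by
  unfold util bump
  rw [Finset.sum_add_distrib, Finset.sum_ite_mem]
  rw [Finset.sum_const, nsmul_eq_mul]
  ring

lemma card_inter_singleton (X : Finset Ω) (j : Ω) :
    ((X ∩ {j}).card : ℝ) = if j ∈ X then 1 else 0 := by
  by_cases h : j ∈ X
  · rw [Finset.inter_singleton_of_mem h]; simp [h]
  · rw [Finset.inter_singleton_of_notMem h]; simp [h]

lemma util_bump_single (v : Finset Ω → ℝ) (p : Ω → ℝ) (j : Ω) (c : ℝ) (X : Finset Ω) :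
    util v (bump p {j} c) X = util v p X - (if j ∈ X then c else 0) := by
  rw [util_bump, card_inter_singleton]
  by_cases h : j ∈ X <;> simp [h]

lemma util_congr (v : Finset Ω → ℝ) {p q : Ω → ℝ} (X : Finset Ω) (h : ∀ x ∈ X, p x = q x) :
    util v p X = util v q X := by
  unfold util
  rw [Finset.sum_congr rfl h]

lemma util_anti (v : Finset Ω → ℝ) {p q : Ω → ℝ} (h : ∀ j, p j ≤ q j) (X : Finset Ω) :
    util v q X ≤ util v p X := by
  unfold util
  have : ∑ j ∈ X, p j ≤ ∑ j ∈ X, q j := Finset.sum_le_sum fun j _ => h j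
  linarith

end GSAux
namespace GSAux

variable {Ω : Type*} [Fintype Ω] [DecidableEq Ω]

lemma demand_nonempty (v : Finset Ω → ℝ) (p : Ω → ℝ) : ∃ A, A ∈ Demand v p := by
  obtain ⟨A, -, hA⟩ := (Finset.univ : Finset (Finset Ω)).exists_max_image (util v p)
    ⟨∅, Finset.mem_univ _⟩
  exact ⟨A, fun T => hA T (Finset.mem_univ _)⟩

lemma maxUtil_eq {v : Finset Ω → ℝ} {p : Ω → ℝ} {A : Finset Ω} (hA : A ∈ Demand v p) :
    maxUtil v p = util v p A := by
  unfold maxUtil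
  refine le_antisymm (Finset.sup'_le _ _ fun T _ => hA T) (Finset.le_sup' _ (Finset.mem_univ A))

lemma util_le_maxUtil (v : Finset Ω → ℝ) (p : Ω → ℝ) (T : Finset Ω) :
    util v p T ≤ maxUtil v p :=
  Finset.le_sup' _ (Finset.mem_univ T)

lemma mem_demand_of_eq {v : Finset Ω → ℝ} {p : Ω → ℝ} {X : Finset Ω}
    (h : util v p X = maxUtil v p) : X ∈ Demand v p := by
  intro T
  rw [h]; exact util_le_maxUtil v p T

lemma not_demand_lt {v : Finset Ω → ℝ} {p : Ω → ℝ} {X : Finset Ω} (h : X ∉ Demand v p) :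
    util v p X < maxUtil v p := by
  rcases lt_or_eq_of_le (util_le_maxUtil v p X) with h' | h'
  · exact h'
  · exact absurd (mem_demand_of_eq h') h

/-- integrality gap -/
lemma int_gap {x y : ℝ} (hx : ∃ a : ℤ, x = a) (hy : ∃ b : ℤ, y = b) (h : x < y) :
    x + 1 ≤ y := by
  obtain ⟨a, rfl⟩ := hx
  obtain ⟨b, rfl⟩ := hy
  have : a < b := by exact_mod_cast h
  have := Int.add_one_le_iff.mpr this
  exact_mod_cast this

lemma util_int {v : Finset Ω → ℝ} {p : Ω → ℝ} (hv : IsIntVal v) (hp : IsIntVec p)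
    (S : Finset Ω) : ∃ z : ℤ, util v p S = z := by
  choose zv hzv using hv
  choose zp hzp using hp
  refine ⟨zv S - ∑ j ∈ S, zp j, ?_⟩
  unfold util
  rw [hzv S]
  rw [Finset.sum_congr rfl (fun j _ => hzp j)]
  push_cast
  ring

lemma maxUtil_int {v : Finset Ω → ℝ} {p : Ω → ℝ} (hv : IsIntVal v) (hp : IsIntVec p) :
    ∃ z : ℤ, maxUtil v p = z := by
  obtain ⟨A, hA⟩ := demand_nonempty v p
  rw [maxUtil_eq hA]
  exact util_int hv hp A

/-- the maximum value of the valuation -/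
def vSup (v : Finset Ω → ℝ) : ℝ :=
  (Finset.univ : Finset (Finset Ω)).sup' ⟨∅, Finset.mem_univ _⟩ v

lemma le_vSup (v : Finset Ω → ℝ) (X : Finset Ω) : v X ≤ vSup v :=
  Finset.le_sup' _ (Finset.mem_univ X)

lemma vSup_int {v : Finset Ω → ℝ} (hv : IsIntVal v) : ∃ z : ℤ, vSup v = z := by
  obtain ⟨X, -, hX⟩ := Finset.exists_mem_eq_sup'
    (⟨∅, Finset.mem_univ _⟩ : (Finset.univ : Finset (Finset Ω)).Nonempty) v
  rw [show vSup v = v X from hX]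
  exact hv X

lemma util_le_vSup {v : Finset Ω → ℝ} {p : Ω → ℝ} (hp : ∀ j, 0 ≤ p j) (X : Finset Ω) :
    util v p X ≤ vSup v := by
  unfold util
  have h1 : (0:ℝ) ≤ ∑ j ∈ X, p j := Finset.sum_nonneg fun j _ => hp j
  have := le_vSup v X
  linarith

lemma maxUtil_le_vSup {v : Finset Ω → ℝ} {p : Ω → ℝ} (hp : ∀ j, 0 ≤ p j) :
    maxUtil v p ≤ vSup v := by
  obtain ⟨A, hA⟩ := demand_nonempty v p
  rw [maxUtil_eq hA]; exact util_le_vSup hp A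

/-- a set containing an item whose price was bumped by `Λ` has small utility -/
lemma util_big {v : Finset Ω → ℝ} {τ : Ω → ℝ} (hτ : ∀ j, 0 ≤ τ j) {R : Finset Ω}
    {Λ : ℝ} (hΛ : 0 ≤ Λ) {X : Finset Ω} {x : Ω} (hxX : x ∈ X) (hxR : x ∈ R) :
    util v (bump τ R Λ) X ≤ vSup v - Λ := by
  unfold util
  set q := bump τ R Λ with hq
  have hq0 : ∀ j, 0 ≤ q j := bump_nonneg hτ hΛ
  have hqx : Λ ≤ q x := by
    simp only [hq, bump, hxR, if_pos]
    have := hτ x; linarith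
  have h1 : Λ ≤ ∑ j ∈ X, q j :=
    le_trans hqx (Finset.single_le_sum (fun j _ => hq0 j) hxX)
  have := le_vSup v X
  linarith

/-- if `X` is not demanded (integer data), its utility is ≤ max − 1. -/
lemma second_level {v : Finset Ω → ℝ} {p : Ω → ℝ} (hv : IsIntVal v) (hp : IsIntVec p)
    {X : Finset Ω} (h : X ∉ Demand v p) : util v p X + 1 ≤ maxUtil v p :=
  int_gap (util_int hv hp X) (maxUtil_int hv hp) (not_demand_lt h)

end GSAux
namespace GSAux

variable {Ω : Type*} [Fintype Ω] [DecidableEq Ω]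

/-- `fInf v p S`: minimum of `|D ∩ S|` over all demanded sets. -/
def fInf (v : Finset Ω → ℝ) (p : Ω → ℝ) (S : Finset Ω) : ℕ :=
  sInf ((fun D => (D ∩ S).card) '' Demand v p)

lemma fInf_exists (v : Finset Ω → ℝ) (p : Ω → ℝ) (S : Finset Ω) :
    ∃ D ∈ Demand v p, (D ∩ S).card = fInf v p S := by
  obtain ⟨A, hA⟩ := demand_nonempty v p
  have hne : ((fun D => (D ∩ S).card) '' Demand v p).Nonempty := ⟨_, ⟨A, hA, rfl⟩⟩
  obtain ⟨D, hD, hDc⟩ := Nat.sInf_mem hne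
  exact ⟨D, hD, hDc⟩

lemma fInf_le {v : Finset Ω → ℝ} {p : Ω → ℝ} {S D : Finset Ω} (hD : D ∈ Demand v p) :
    fInf v p S ≤ (D ∩ S).card :=
  Nat.sInf_le ⟨D, hD, rfl⟩

lemma exists_demandMin_subset {v : Finset Ω → ℝ} {p : Ω → ℝ} {D : Finset Ω}
    (hD : D ∈ Demand v p) : ∃ D' ∈ DemandMin v p, D' ⊆ D := by
  classical
  set 𝒮 : Finset (Finset Ω) :=
    Finset.univ.filter (fun X => X ⊆ D ∧ X ∈ Demand v p) with h𝒮
  have hDmem : D ∈ 𝒮 := by simp [h𝒮, hD]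
  obtain ⟨D', hD'mem, hmin⟩ := 𝒮.exists_min_image Finset.card ⟨D, hDmem⟩
  have hD' : D' ⊆ D ∧ D' ∈ Demand v p := by
    simpa [h𝒮] using hD'mem
  refine ⟨D', ⟨hD'.2, ?_⟩, hD'.1⟩
  intro X hX
  rcases lt_or_eq_of_le (hD'.2 X) with h | h
  · exact h
  · exfalso
    have hXd : X ∈ Demand v p := mem_demand_of_eq (by rw [h, ← maxUtil_eq hD'.2])
    have hXmem : X ∈ 𝒮 := by
      simp only [h𝒮, Finset.mem_filter]
      exact ⟨Finset.mem_univ _, hX.subset.trans hD'.1, hXd⟩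
    have := hmin X hXmem
    have := Finset.card_lt_card hX
    omega

lemma fMin_eq_fInf (v : Finset Ω → ℝ) (p : Ω → ℝ) (S : Finset Ω) :
    fMin v p S = fInf v p S := by
  refine le_antisymm ?_ ?_
  · obtain ⟨D, hD, hDc⟩ := fInf_exists v p S
    obtain ⟨D', hD', hsub⟩ := exists_demandMin_subset hD
    calc fMin v p S ≤ (D' ∩ S).card := Nat.sInf_le ⟨D', hD', rfl⟩
      _ ≤ (D ∩ S).card := Finset.card_le_card (Finset.inter_subset_inter hsub le_rfl)
      _ = fInf v p S := hDc
  · obtain ⟨A, hA⟩ := demand_nonempty v p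
    obtain ⟨A', hA', -⟩ := exists_demandMin_subset hA
    have hne : ((fun D => (D ∩ S).card) '' DemandMin v p).Nonempty := ⟨_, ⟨A', hA', rfl⟩⟩
    obtain ⟨E, hE, hEc⟩ := Nat.sInf_mem hne
    exact le_trans (fInf_le hE.1) (le_of_eq hEc)

/-- The max utility weakly decreases when prices are bumped up. -/
lemma maxUtil_bump_le (v : Finset Ω → ℝ) (p : Ω → ℝ) (T : Finset Ω) {c : ℝ} (hc : 0 ≤ c) :
    maxUtil v (bump p T c) ≤ maxUtil v p := by
  obtain ⟨B, hB⟩ := demand_nonempty v (bump p T c)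
  rw [maxUtil_eq hB, util_bump]
  have h1 : (0:ℝ) ≤ c * (B ∩ T).card := by positivity
  have := util_le_maxUtil v p B
  linarith

/-- B2: if some demanded set avoids `b`, bumping `b` keeps the max and the demanded
sets at the bumped price are exactly old demanded sets avoiding `b`. -/
lemma bump_single_miss {v : Finset Ω → ℝ} {p : Ω → ℝ} {b : Ω} {A : Finset Ω}
    (hA : A ∈ Demand v p) (hbA : b ∉ A) :
    maxUtil v (bump p {b} 1) = maxUtil v p ∧
    ∀ X ∈ Demand v (bump p {b} 1), X ∈ Demand v p ∧ b ∉ X := by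
  have hle : maxUtil v (bump p {b} 1) ≤ maxUtil v p := maxUtil_bump_le v p {b} zero_le_one
  have hgeA : util v (bump p {b} 1) A = util v p A := by
    rw [util_bump_single]; simp [hbA]
  have hge : maxUtil v p ≤ maxUtil v (bump p {b} 1) := by
    rw [maxUtil_eq hA, ← hgeA]; exact util_le_maxUtil _ _ _
  have hmax : maxUtil v (bump p {b} 1) = maxUtil v p := le_antisymm hle hge
  refine ⟨hmax, fun X hX => ?_⟩
  have hXval : util v (bump p {b} 1) X = maxUtil v p := by rw [← hmax, ← maxUtil_eq hX]
  rw [util_bump_single] at hXval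
  by_cases hbX : b ∈ X
  · exfalso
    simp only [hbX, if_pos] at hXval
    have := util_le_maxUtil v p X
    linarith
  · simp only [hbX, if_neg, not_false_iff, sub_zero] at hXval
    exact ⟨mem_demand_of_eq hXval, hbX⟩

/-- B3: if every demanded set contains `b` (integer data), bumping `b` by 1 drops the
max utility by exactly 1. -/
lemma bump_single_hit {v : Finset Ω → ℝ} {p : Ω → ℝ} {b : Ω} (hv : IsIntVal v)
    (hp : IsIntVec p) (hall : ∀ A ∈ Demand v p, b ∈ A) :
    maxUtil v (bump p {b} 1) = maxUtil v p - 1 := by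
  obtain ⟨A, hA⟩ := demand_nonempty v p
  have hbA := hall A hA
  refine le_antisymm ?_ ?_
  · obtain ⟨B, hB⟩ := demand_nonempty v (bump p {b} 1)
    rw [maxUtil_eq hB, util_bump_single]
    by_cases hbB : b ∈ B
    · simp only [hbB, if_pos]
      have := util_le_maxUtil v p B
      linarith
    · simp only [hbB, if_neg, not_false_iff, sub_zero]
      have hBnd : B ∉ Demand v p := fun h => hbB (hall B h)
      have := second_level hv hp hBnd
      linarith
  · have : util v (bump p {b} 1) A = util v p A - 1 := by
      rw [util_bump_single]; simp [hbA]
    rw [maxUtil_eq hA, ← this]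
    exact util_le_maxUtil _ _ _

end GSAux
namespace GSAux

variable {Ω : Type*} [Fintype Ω] [DecidableEq Ω]

/-- If every demanded set at integer price `r` contains `j`, then after bumping the
price of a single other item `b`, every demanded set still contains `j`. -/
lemma sigma_single {v : Finset Ω → ℝ} (hgs : GrossSubstitute v) (hv : IsIntVal v)
    {r : Ω → ℝ} (hr0 : ∀ j, 0 ≤ r j) (hrint : IsIntVec r) {j b : Ω} (hbj : b ≠ j)
    (hj : ∀ A ∈ Demand v r, j ∈ A) : ∀ Y ∈ Demand v (bump r {b} 1), j ∈ Y := by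
  intro Y hY
  by_contra hjY
  obtain ⟨A, hA⟩ := demand_nonempty v r
  set U := maxUtil v r with hU
  -- every demanded set at r contains b as well
  have hball : ∀ A' ∈ Demand v r, b ∈ A' := by
    by_contra h
    push_neg at h
    obtain ⟨A₀, hA₀, hbA₀⟩ := h
    exact hjY (hj Y ((bump_single_miss hA₀ hbA₀).2 Y hY).1)
  have hUb : maxUtil v (bump r {b} 1) = U - 1 := bump_single_hit hv hrint hball
  have hYval : util v (bump r {b} 1) Y = U - 1 := by rw [← maxUtil_eq hY, hUb]
  have hbY : b ∉ Y := by
    intro hbY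
    have hYr : util v r Y = U := by
      rw [util_bump_single] at hYval
      simp only [hbY, if_pos] at hYval
      linarith
    exact hjY (hj Y (mem_demand_of_eq hYr))
  have hYr : util v r Y = U - 1 := by
    rw [util_bump_single] at hYval
    simpa [hbY] using hYval
  -- the half-bumped price τ and the j-killing price q
  set τ := bump (bump r {j} (1/2)) {b} (1/2) with hτ
  have hτutil : ∀ X, util v τ X
      = util v r X - (if j ∈ X then (1:ℝ)/2 else 0) - (if b ∈ X then (1:ℝ)/2 else 0) := by
    intro X
    rw [hτ, util_bump_single, util_bump_single]
  have hτ0 : ∀ x, 0 ≤ τ x :=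
    bump_nonneg (bump_nonneg hr0 (by norm_num)) (by norm_num)
  have hAval : util v τ A = U - 1 := by
    rw [hτutil]
    simp only [hj A hA, hball A hA, if_pos]
    rw [hU, maxUtil_eq hA]
    ring
  have hAτ : A ∈ Demand v τ := by
    intro X
    rw [hAval, hτutil]
    by_cases hX : X ∈ Demand v r
    · simp only [hj X hX, hball X hX, if_pos]
      rw [hU, maxUtil_eq hX]; ring_nf; exact le_rfl
    · have h2 := second_level hv hrint hX
      have e1 : (0:ℝ) ≤ (if j ∈ X then (1:ℝ)/2 else 0) := by positivity
      have e2 : (0:ℝ) ≤ (if b ∈ X then (1:ℝ)/2 else 0) := by positivity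
      linarith
  set Λ := vSup v - U + 2 with hΛ
  have hΛ2 : 2 ≤ Λ := by
    have := maxUtil_le_vSup (v := v) hr0
    rw [hΛ]; rw [hU]; linarith
  set q := bump τ {j} Λ with hq
  have hq_eq : ∀ x, x ≠ j → τ x = q x := by
    intro x hx
    rw [hq]; unfold bump
    simp [hx]
  have hYq : util v q Y = U - 1 := by
    have : util v τ Y = util v q Y :=
      util_congr v Y (fun x hx => hq_eq x (fun hxj => hjY (hxj ▸ hx)))
    rw [← this, hτutil]
    simp only [hjY, hbY, if_neg, not_false_iff]
    rw [hYr]; ring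
  have hVchar : ∀ V ∈ Demand v q, b ∉ V := by
    intro V hV hbV
    have hVY : util v q Y ≤ util v q V := hV Y
    rw [hYq] at hVY
    by_cases hjV : j ∈ V
    · have hbig := util_big (v := v) hτ0 (by linarith : (0:ℝ) ≤ Λ) hjV
        (Finset.mem_singleton_self j)
      rw [← hq] at hbig
      linarith
    · have hVr : V ∉ Demand v r := fun h => hjV (hj V h)
      have h2 := second_level hv hrint hVr
      have hcongr : util v τ V = util v q V :=
        util_congr v V (fun x hx => hq_eq x (fun hxj => hjV (hxj ▸ hx)))
      rw [hτutil] at hcongr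
      simp only [hjV, hbV, if_pos, if_neg, not_false_iff] at hcongr
      linarith
  obtain ⟨V, hV, hkeep⟩ := hgs τ q hτ0 (by rw [hq]; exact bump_le τ {j} (by linarith)) A hAτ
  exact hVchar V hV (hkeep b (hball A hA) (hq_eq b hbj))

/-- Multi-item version of `sigma_single`. -/
lemma sigma_multi {v : Finset Ω → ℝ} (hgs : GrossSubstitute v) (hv : IsIntVal v) {j : Ω} :
    ∀ (T : Finset Ω) (r : Ω → ℝ), (∀ x, 0 ≤ r x) → IsIntVec r →
      (∀ A ∈ Demand v r, j ∈ A) → j ∉ T → ∀ Y ∈ Demand v (bump r T 1), j ∈ Y := by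
  intro T
  induction T using Finset.induction_on with
  | empty =>
    intro r h0 hint hall hjT Y hY
    rw [bump_empty] at hY
    exact hall Y hY
  | @insert b T₁ hb IH =>
    intro r h0 hint hall hjT Y hY
    have hjT₁ : j ∉ T₁ := fun h => hjT (Finset.mem_insert_of_mem h)
    have hjb : b ≠ j := fun h => hjT (h ▸ Finset.mem_insert_self b T₁)
    rw [bump_insert _ hb] at hY
    exact sigma_single hgs hv (bump_nonneg h0 zero_le_one) (bump_int hint ⟨1, by norm_num⟩)
      hjb (IH r h0 hint hall hjT₁) Y hY

end GSAux
namespace GSAux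

variable {Ω : Type*} [Fintype Ω] [DecidableEq Ω]

/-- Bumping the price of a single item `k ∉ T` cannot decrease `fInf · T`. -/
lemma mono_single {v : Finset Ω → ℝ} (hgs : GrossSubstitute v) (hv : IsIntVal v)
    {r : Ω → ℝ} (hr0 : ∀ x, 0 ≤ r x) (hrint : IsIntVec r) {k : Ω} {T : Finset Ω}
    (hkT : k ∉ T) : fInf v r T ≤ fInf v (bump r {k} 1) T := by
  obtain ⟨D', hD', hD'c⟩ := fInf_exists v (bump r {k} 1) T
  rw [← hD'c]
  by_cases hex : ∃ A ∈ Demand v r, k ∉ A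
  · obtain ⟨A₀, hA₀, hk₀⟩ := hex
    exact fInf_le ((bump_single_miss hA₀ hk₀).2 D' hD').1
  · push_neg at hex
    set U := maxUtil v r with hU
    have hUb : maxUtil v (bump r {k} 1) = U - 1 := bump_single_hit hv hrint hex
    have hD'val : util v (bump r {k} 1) D' = U - 1 := by rw [← maxUtil_eq hD', hUb]
    by_cases hkD' : k ∈ D'
    · have hD'r : util v r D' = U := by
        rw [util_bump_single] at hD'val
        simp only [hkD', if_pos] at hD'val
        linarith
      exact fInf_le (mem_demand_of_eq hD'r)
    · have hD'r : util v r D' = U - 1 := by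
        rw [util_bump_single] at hD'val
        simpa [hkD'] using hD'val
      by_cases hsub : ∃ A' ∈ Demand v r, A' ⊆ insert k D'
      · obtain ⟨A', hA', hsubA⟩ := hsub
        have hcard : A' ∩ T ⊆ D' ∩ T := by
          intro x hx
          rw [Finset.mem_inter] at hx ⊢
          rcases Finset.mem_insert.mp (hsubA hx.1) with h | h
          · exact absurd (h ▸ hx.2) hkT
          · exact ⟨h, hx.2⟩
        exact le_trans (fInf_le hA') (Finset.card_le_card hcard)
      · exfalso
        push_neg at hsub
        obtain ⟨A, hA⟩ := demand_nonempty v r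
        set τ' := bump r {k} (1/2) with hτ'
        have hτ'util : ∀ X, util v τ' X = util v r X - (if k ∈ X then (1:ℝ)/2 else 0) := by
          intro X; rw [hτ', util_bump_single]
        have hτ'0 : ∀ x, 0 ≤ τ' x := bump_nonneg hr0 (by norm_num)
        have hAval : util v τ' A = U - 1/2 := by
          rw [hτ'util]
          simp only [hex A hA, if_pos]
          rw [hU, maxUtil_eq hA]
        have hAτ' : A ∈ Demand v τ' := by
          intro X
          rw [hAval, hτ'util]
          by_cases hX : X ∈ Demand v r
          · simp only [hex X hX, if_pos]
            rw [hU, maxUtil_eq hX]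
          · have h2 := second_level hv hrint hX
            have e1 : (0:ℝ) ≤ (if k ∈ X then (1:ℝ)/2 else 0) := by positivity
            linarith
        set R := (insert k D')ᶜ with hR
        set Λ := vSup v - U + 2 with hΛ
        have hΛ2 : 2 ≤ Λ := by
          have := maxUtil_le_vSup (v := v) hr0
          rw [hΛ, hU]; linarith
        set χ := bump τ' R Λ with hχ
        have hχ_eq : ∀ x, x ∈ insert k D' → τ' x = χ x := by
          intro x hx
          have : x ∉ R := fun hc => by
            rw [hR, Finset.mem_compl] at hc
            exact hc hx
          rw [hχ]; unfold bump; simp [this]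
        have hD'χ : util v χ D' = U - 1 := by
          have : util v τ' D' = util v χ D' :=
            util_congr v D' (fun x hx => hχ_eq x (Finset.mem_insert_of_mem hx))
          rw [← this, hτ'util]
          simp only [hkD', if_neg, not_false_iff, sub_zero]
          exact hD'r
        have hVchar : ∀ V ∈ Demand v χ, k ∉ V := by
          intro V hV hkV
          have hVD : util v χ D' ≤ util v χ V := hV D'
          rw [hD'χ] at hVD
          by_cases hVR : ∃ x ∈ V, x ∈ R
          · obtain ⟨x, hxV, hxR⟩ := hVR
            have hbig := util_big (v := v) hτ'0 (by linarith : (0:ℝ) ≤ Λ) hxV hxR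
            rw [← hχ] at hbig
            linarith
          · push_neg at hVR
            have hVsub : V ⊆ insert k D' := by
              intro x hx
              have := hVR x hx
              rw [hR, Finset.mem_compl, not_not] at this
              exact this
            have hVr : V ∉ Demand v r := fun h => hsub V h hVsub
            have h2 := second_level hv hrint hVr
            have hcongr : util v τ' V = util v χ V :=
              util_congr v V (fun x hx => hχ_eq x (hVsub hx))
            rw [hτ'util] at hcongr
            simp only [hkV, if_pos] at hcongr
            linarith
        obtain ⟨V, hV, hkeep⟩ :=
          hgs τ' χ hτ'0 (by rw [hχ]; exact bump_le τ' R (by linarith)) A hAτ'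
        exact hVchar V hV
          (hkeep k (hex A hA) (hχ_eq k (Finset.mem_insert_self k D')))

end GSAux
namespace GSAux

variable {Ω : Type*} [Fintype Ω] [DecidableEq Ω]

/-- THE DROP LEMMA: for a gross-substitutes integer valuation and integer prices,
bumping prices on `T` by one decreases the max utility by exactly
`min_{D demanded} |D ∩ T|`. -/
lemma drop_lemma {v : Finset Ω → ℝ} (hgs : GrossSubstitute v) (hv : IsIntVal v) :
    ∀ (T : Finset Ω) (p : Ω → ℝ), (∀ x, 0 ≤ p x) → IsIntVec p →
      (fInf v p T : ℝ) = maxUtil v p - maxUtil v (bump p T 1) := by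
  intro T
  induction T using Finset.induction_on with
  | empty =>
    intro p hp0 hpint
    rw [bump_empty]
    obtain ⟨D, hD, hc⟩ := fInf_exists v p ∅
    rw [Finset.inter_empty, Finset.card_empty] at hc
    rw [← hc]
    simp
  | @insert j T₀ hjT IH =>
    intro p hp0 hpint
    have hP0 : ∀ x, 0 ≤ bump p T₀ 1 x := bump_nonneg hp0 zero_le_one
    have hPint : IsIntVec (bump p T₀ 1) := bump_int hpint ⟨1, by norm_num⟩
    have hIH : (fInf v p T₀ : ℝ) = maxUtil v p - maxUtil v (bump p T₀ 1) := IH p hp0 hpint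
    have hprice : bump p (insert j T₀) 1 = bump (bump p T₀ 1) {j} 1 := bump_insert p hjT
    -- direction 1 : maxUtil p − fInf ≤ maxUtil (bump)
    obtain ⟨D₀, hD₀, hD₀c⟩ := fInf_exists v p (insert j T₀)
    have dir1 : maxUtil v p - (fInf v p (insert j T₀) : ℝ)
        ≤ maxUtil v (bump p (insert j T₀) 1) := by
      have h := util_le_maxUtil v (bump p (insert j T₀) 1) D₀
      rw [util_bump] at h
      have hduv : util v p D₀ = maxUtil v p := (maxUtil_eq hD₀).symm
      have hcast : ((D₀ ∩ insert j T₀).card : ℝ) = (fInf v p (insert j T₀) : ℝ) := by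
        exact_mod_cast congrArg (Nat.cast : ℕ → ℝ) hD₀c
      rw [hduv, hcast] at h
      linarith
    by_cases hall : ∀ A ∈ Demand v (bump p T₀ 1), j ∈ A
    · -- σ = 1
      have hUb : maxUtil v (bump (bump p T₀ 1) {j} 1) = maxUtil v (bump p T₀ 1) - 1 :=
        bump_single_hit hv hPint hall
      obtain ⟨D, hD, hDc⟩ := fInf_exists v p T₀
      have hsub : D ∩ insert j T₀ ⊆ insert j (D ∩ T₀) := by
        intro x hx
        rw [Finset.mem_inter] at hx
        rcases Finset.mem_insert.mp hx.2 with h | h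
        · exact h ▸ Finset.mem_insert_self _ _
        · exact Finset.mem_insert_of_mem (Finset.mem_inter.mpr ⟨hx.1, h⟩)
      have hle : fInf v p (insert j T₀) ≤ fInf v p T₀ + 1 := by
        calc fInf v p (insert j T₀) ≤ (D ∩ insert j T₀).card := fInf_le hD
          _ ≤ (insert j (D ∩ T₀)).card := Finset.card_le_card hsub
          _ ≤ (D ∩ T₀).card + 1 := Finset.card_insert_le _ _
          _ = fInf v p T₀ + 1 := by rw [hDc]
      have hleR : (fInf v p (insert j T₀) : ℝ) ≤ (fInf v p T₀ : ℝ) + 1 := by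
        exact_mod_cast hle
      rw [hprice, hUb] at dir1 ⊢
      linarith
    · -- σ = 0
      push_neg at hall
      obtain ⟨Y, hY, hjY⟩ := hall
      have hUb : maxUtil v (bump (bump p T₀ 1) {j} 1) = maxUtil v (bump p T₀ 1) :=
        (bump_single_miss hY hjY).1
      by_cases hA : ∃ A ∈ Demand v p, j ∉ A
      · obtain ⟨A, hAd, hjA⟩ := hA
        set Λ' := vSup v - maxUtil v p + 2 with hΛ'
        have hΛ'2 : 2 ≤ Λ' := by
          have := maxUtil_le_vSup (v := v) hp0
          rw [hΛ']; linarith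
        have hΛ'int : ∃ z : ℤ, Λ' = z := by
          obtain ⟨a, ha⟩ := vSup_int hv
          obtain ⟨b, hb⟩ := maxUtil_int hv hpint
          exact ⟨a - b + 2, by rw [hΛ', ha, hb]; push_cast; ring⟩
        set p' := bump p {j} Λ' with hp'
        have hp'0 : ∀ x, 0 ≤ p' x := bump_nonneg hp0 (by linarith)
        have hp'int : IsIntVec p' := bump_int hpint hΛ'int
        have hp'eq : ∀ x, x ≠ j → p x = p' x := by
          intro x hx
          rw [hp']; unfold bump; simp [hx]
        have hU' : maxUtil v p' = maxUtil v p := by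
          refine le_antisymm (maxUtil_bump_le v p {j} (by linarith)) ?_
          have h1 : util v p A = util v p' A :=
            util_congr v A (fun x hx => hp'eq x (fun hxj => hjA (hxj ▸ hx)))
          rw [maxUtil_eq hAd, h1]
          exact util_le_maxUtil _ _ _
        have hp'char : ∀ V ∈ Demand v p', V ∈ Demand v p ∧ j ∉ V := by
          intro V hV
          have hVval : util v p' V = maxUtil v p := by rw [← maxUtil_eq hV, hU']
          by_cases hjV : j ∈ V
          · exfalso
            have hbig := util_big (v := v) hp0 (by linarith : (0:ℝ) ≤ Λ') hjV
              (Finset.mem_singleton_self j)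
            rw [← hp'] at hbig
            rw [hΛ'] at hbig
            rw [hVval] at hbig
            linarith
          · have h1 : util v p V = util v p' V :=
              util_congr v V (fun x hx => hp'eq x (fun hxj => hjV (hxj ▸ hx)))
            exact ⟨mem_demand_of_eq (h1.trans hVval), hjV⟩
        have hIH' : (fInf v p' T₀ : ℝ) = maxUtil v p' - maxUtil v (bump p' T₀ 1) :=
          IH p' hp'0 hp'int
        have hcomm : bump p' T₀ 1 = bump (bump p T₀ 1) {j} Λ' := by
          rw [hp']; exact bump_comm p {j} T₀ Λ' 1
        have hU'' : maxUtil v (bump (bump p T₀ 1) {j} Λ') = maxUtil v (bump p T₀ 1) := by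
          refine le_antisymm (maxUtil_bump_le v _ {j} (by linarith)) ?_
          have h1 : util v (bump p T₀ 1) Y = util v (bump (bump p T₀ 1) {j} Λ') Y := by
            refine util_congr v Y (fun x hx => ?_)
            unfold bump
            have : x ≠ j := fun hxj => hjY (hxj ▸ hx)
            simp [this]
          rw [maxUtil_eq hY, h1]
          exact util_le_maxUtil _ _ _
        have hfeq : (fInf v p' T₀ : ℝ) = (fInf v p T₀ : ℝ) := by
          rw [hIH', hU', hcomm, hU'', hIH]
        have hfeqn : fInf v p' T₀ = fInf v p T₀ := by exact_mod_cast hfeq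
        obtain ⟨Z, hZ, hZc⟩ := fInf_exists v p' T₀
        obtain ⟨hZp, hjZ⟩ := hp'char Z hZ
        have hZT' : (Z ∩ insert j T₀).card = fInf v p T₀ := by
          have hinter : Z ∩ insert j T₀ = Z ∩ T₀ := by
            ext x
            simp only [Finset.mem_inter, Finset.mem_insert]
            constructor
            · rintro ⟨hxZ, h | h⟩
              · exact absurd (h ▸ hxZ) hjZ
              · exact ⟨hxZ, h⟩
            · rintro ⟨hxZ, h⟩
              exact ⟨hxZ, Or.inr h⟩
          rw [hinter, hZc, hfeqn]
        have hle2 : fInf v p (insert j T₀) ≤ fInf v p T₀ := hZT' ▸ fInf_le hZp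
        have hle2R : (fInf v p (insert j T₀) : ℝ) ≤ (fInf v p T₀ : ℝ) := by
          exact_mod_cast hle2
        rw [hprice, hUb] at dir1 ⊢
        linarith
      · exfalso
        push_neg at hA
        exact hjY (sigma_multi hgs hv T₀ p hp0 hpint hA hjT Y hY)

/-- a nonnegative integer-valued real is a natural number -/
lemma exists_nat_of_int_nonneg {x : ℝ} (hx : ∃ z : ℤ, x = z) (h0 : 0 ≤ x) :
    ∃ n : ℕ, x = n := by
  obtain ⟨z, rfl⟩ := hx
  have : 0 ≤ z := by exact_mod_cast h0
  refine ⟨z.toNat, ?_⟩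
  have h2 : ((z.toNat : ℤ) : ℝ) = (z : ℝ) := by exact_mod_cast congrArg (Int.cast : ℤ → ℝ) (Int.toNat_of_nonneg this)
  exact_mod_cast h2.symm

/-- Monotonicity: raising prices off `T` cannot decrease `fInf · T`. -/
lemma mono_multi {v : Finset Ω → ℝ} (hgs : GrossSubstitute v) (hv : IsIntVal v)
    {T : Finset Ω} :
    ∀ (N : ℕ) (p q : Ω → ℝ), (∀ x, 0 ≤ p x) → IsIntVec p → IsIntVec q →
      (∀ x, p x ≤ q x) → (∀ x ∈ T, p x = q x) → (∑ x, (q x - p x)) = (N : ℝ) →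
      fInf v p T ≤ fInf v q T := by
  intro N
  induction N with
  | zero =>
    intro p q hp0 hpint hqint hle hTeq hsum
    have hpq : p = q := by
      funext x
      have h := (Finset.sum_eq_zero_iff_of_nonneg
        (fun x _ => by linarith [hle x] : ∀ x ∈ Finset.univ, (0:ℝ) ≤ q x - p x)).mp
        (by rw [hsum]; norm_num) x (Finset.mem_univ x)
      linarith
    rw [hpq]
  | succ N IHN =>
    intro p q hp0 hpint hqint hle hTeq hsum
    have hk : ∃ k, p k < q k := by
      by_contra h
      push_neg at h
      have hpq : ∀ x, q x - p x = 0 := fun x => by linarith [hle x, h x]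
      rw [Finset.sum_congr rfl (fun x _ => hpq x), Finset.sum_const_zero] at hsum
      have hN : (0:ℝ) ≤ (N:ℝ) := Nat.cast_nonneg N
      push_cast at hsum
      linarith
    obtain ⟨k, hklt⟩ := hk
    have hkT : k ∉ T := fun h => absurd (hTeq k h) (ne_of_lt hklt)
    have hgap : p k + 1 ≤ q k := int_gap (hpint k) (hqint k) hklt
    set p₁ := bump p {k} 1 with hp₁
    have hp₁0 : ∀ x, 0 ≤ p₁ x := bump_nonneg hp0 zero_le_one
    have hp₁int : IsIntVec p₁ := bump_int hpint ⟨1, by norm_num⟩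
    have hp₁le : ∀ x, p₁ x ≤ q x := by
      intro x
      rw [hp₁]; unfold bump
      by_cases hx : x = k
      · subst hx; simp; linarith
      · simp [hx]; exact hle x
    have hp₁T : ∀ x ∈ T, p₁ x = q x := by
      intro x hx
      have hxk : x ≠ k := fun h => hkT (h ▸ hx)
      rw [hp₁]; unfold bump
      simp [hxk]
      exact hTeq x hx
    have hp₁sum : (∑ x, (q x - p₁ x)) = (N : ℝ) := by
      have : ∀ x, q x - p₁ x = (q x - p x) - (if x ∈ ({k} : Finset Ω) then (1:ℝ) else 0) := by
        intro x; rw [hp₁]; unfold bump; ring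
      rw [Finset.sum_congr rfl (fun x _ => this x), Finset.sum_sub_distrib,
        Finset.sum_ite_mem, Finset.univ_inter, Finset.sum_singleton, hsum]
      push_cast
      ring
    exact le_trans (mono_single hgs hv hp0 hpint hkT)
      (IHN p₁ q hp₁0 hp₁int hqint hp₁le hp₁T hp₁sum)

end GSAux
/-- the Gul–Stacchetti price increase along the minimal most over-demanded
set never overshoots an optimal price vector. -/
theorem gs_auction_never_overshoots {Ω : Type*} [Fintype Ω] [DecidableEq Ω] {n : ℕ}
    (v : Fin n → Finset Ω → ℝ) (hval : ∀ i, IsValuation (v i))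
    (hgs : ∀ i, GrossSubstitute (v i)) (hint : ∀ i, IsIntVal (v i))
    (pstar : Ω → ℝ) (hps : ∀ j, 0 ≤ pstar j) (hpsint : IsIntVec pstar)
    (hopt : ∀ q : Ω → ℝ, (∀ j, 0 ≤ q j) → IsIntVec q → Lyap v pstar ≤ Lyap v q)
    (p : Ω → ℝ) (hp : ∀ j, 0 ≤ p j) (hpint : IsIntVec p)
    (hle : ∀ j, p j ≤ pstar j)
    (O : Finset Ω)
    (hOmax : ∀ S : Finset Ω, fTot v p S ≤ fTot v p O)
    (hOmin : ∀ T : Finset Ω, T ⊂ O → fTot v p T < fTot v p O)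
    (hOpos : 0 < fTot v p O) :
    ∀ j, addInd p O j ≤ pstar j := by
  classical
  -- the set of items of O whose price already equals the optimal price
  set T : Finset Ω := O.filter (fun a => p a = pstar a) with hT
  have hTsub : T ⊆ O := Finset.filter_subset _ _
  -- Main claim: T is empty
  have hTne : ¬ T.Nonempty := by
    intro hTnonempty
    have hOT : O \ T ⊂ O := Finset.sdiff_ssubset hTsub hTnonempty
    have hstrict := hOmin (O \ T) hOT
    unfold fTot at hstrict
    have hz := Int.add_one_le_iff.mpr hstrict
    have hcardZ : ((O \ T).card : ℤ) + (T.card : ℤ) = (O.card : ℤ) := by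
      exact_mod_cast congrArg (Nat.cast : ℕ → ℤ) (Finset.card_sdiff_add_card_eq_card hTsub)
    -- ℝ version of the strict inequality
    have hR : (∑ i, (fMin (v i) p (O \ T) : ℝ)) - ((O \ T).card : ℝ) + 1
        ≤ (∑ i, (fMin (v i) p O : ℝ)) - (O.card : ℝ) := by exact_mod_cast hz
    have hcardR : ((O \ T).card : ℝ) + (T.card : ℝ) = (O.card : ℝ) := by
      exact_mod_cast hcardZ
    -- intermediate price p'' : bump prices on O \ T
    set p'' := GSAux.bump p (O \ T) 1 with hp''
    have hp''0 : ∀ x, 0 ≤ p'' x := GSAux.bump_nonneg hp zero_le_one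
    have hp''int : IsIntVec p'' := GSAux.bump_int hpint ⟨1, by norm_num⟩
    have hp''le : ∀ x, p'' x ≤ pstar x := by
      intro x
      rw [hp'']; unfold GSAux.bump
      by_cases hx : x ∈ O \ T
      · simp only [hx, if_pos]
        have hxO : x ∈ O := (Finset.mem_sdiff.mp hx).1
        have hxT : x ∉ T := (Finset.mem_sdiff.mp hx).2
        have hne : p x ≠ pstar x := by
          intro heq
          exact hxT (by rw [hT]; exact Finset.mem_filter.mpr ⟨hxO, heq⟩)
        exact GSAux.int_gap (hpint x) (hpsint x) (lt_of_le_of_ne (hle x) hne)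
      · simp only [hx, if_neg, not_false_iff, add_zero]
        exact hle x
    have hp''T : ∀ x ∈ T, p'' x = pstar x := by
      intro x hx
      have hxne : x ∉ O \ T := fun h => (Finset.mem_sdiff.mp h).2 hx
      have : p'' x = p x := by rw [hp'']; unfold GSAux.bump; simp [hxne]
      rw [this]
      rw [hT] at hx
      exact (Finset.mem_filter.mp hx).2
    -- key per-player inequality
    have key : ∀ i, (fMin (v i) p O : ℝ) ≤ (fMin (v i) p (O \ T) : ℝ)
        + (maxUtil (v i) pstar - maxUtil (v i) (GSAux.bump pstar T 1)) := by
      intro i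
      rw [GSAux.fMin_eq_fInf, GSAux.fMin_eq_fInf]
      have hOsplit : GSAux.bump p O 1 = GSAux.bump p'' T 1 := by
        rw [hp'', ← GSAux.bump_union p Finset.sdiff_disjoint,
          Finset.sdiff_union_of_subset hTsub]
      have e1 := GSAux.drop_lemma (hgs i) (hint i) O p hp hpint
      have e2 := GSAux.drop_lemma (hgs i) (hint i) (O \ T) p hp hpint
      have e3 := GSAux.drop_lemma (hgs i) (hint i) T p'' hp''0 hp''int
      have e4 := GSAux.drop_lemma (hgs i) (hint i) T pstar hps hpsint
      -- monotonicity
      have hN : ∃ N : ℕ, (∑ x, (pstar x - p'' x)) = (N : ℝ) := by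
        refine GSAux.exists_nat_of_int_nonneg ?_ ?_
        · have : ∀ x, ∃ z : ℤ, pstar x - p'' x = z := by
            intro x
            obtain ⟨a, ha⟩ := hpsint x
            obtain ⟨b, hb⟩ := hp''int x
            exact ⟨a - b, by rw [ha, hb]; push_cast; ring⟩
          choose zz hzz using this
          exact ⟨∑ x, zz x, by rw [Finset.sum_congr rfl (fun x _ => hzz x)]; push_cast; ring⟩
        · exact Finset.sum_nonneg fun x _ => by linarith [hp''le x]
      obtain ⟨N, hNs⟩ := hN
      have hmono : GSAux.fInf (v i) p'' T ≤ GSAux.fInf (v i) pstar T :=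
        GSAux.mono_multi (hgs i) (hint i) N p'' pstar hp''0 hp''int hpsint hp''le hp''T hNs
      have hmonoR : (GSAux.fInf (v i) p'' T : ℝ) ≤ (GSAux.fInf (v i) pstar T : ℝ) := by
        exact_mod_cast hmono
      rw [hOsplit] at e1
      -- e1 : fInf p O = U(p) - U(bump p'' T 1)
      -- e2 : fInf p (O\T) = U(p) - U(p'')
      -- e3 : fInf p'' T = U(p'') - U(bump p'' T 1)
      -- e4 : fInf pstar T = U(pstar) - U(bump pstar T 1)
      have hUP : maxUtil (v i) p'' = maxUtil (v i) (GSAux.bump p (O \ T) 1) := by rw [hp'']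
      linarith
    -- sum the per-player inequality
    have hsum1 : (∑ i, (fMin (v i) p O : ℝ))
        ≤ (∑ i, (fMin (v i) p (O \ T) : ℝ))
          + ((∑ i, maxUtil (v i) pstar) - ∑ i, maxUtil (v i) (GSAux.bump pstar T 1)) := by
      have := Finset.sum_le_sum (fun i (_ : i ∈ Finset.univ) => key i)
      rw [Finset.sum_add_distrib, Finset.sum_sub_distrib] at this
      exact this
    -- the Lyapunov comparison
    have hL := hopt (addInd pstar T) (GSAux.bump_nonneg hps zero_le_one)
      (GSAux.bump_int hpsint ⟨1, by norm_num⟩)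
    rw [GSAux.addInd_eq_bump] at hL
    unfold Lyap at hL
    have hsumP : ∑ j, GSAux.bump pstar T 1 j = (∑ j, pstar j) + (T.card : ℝ) := by
      unfold GSAux.bump
      rw [Finset.sum_add_distrib, Finset.sum_ite_mem, Finset.univ_inter,
        Finset.sum_const, nsmul_eq_mul, mul_one]
    rw [hsumP] at hL
    linarith
  -- conclude
  have hTfact : ∀ x ∈ O, p x ≠ pstar x := by
    intro x hx heq
    exact hTne ⟨x, by rw [hT]; exact Finset.mem_filter.mpr ⟨hx, heq⟩⟩
  intro j
  unfold addInd
  by_cases hj : j ∈ O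
  · simp only [hj, if_pos]
    exact GSAux.int_gap (hpint j) (hpsint j) (lt_of_le_of_ne (hle j) (hTfact j hj))
  · simp only [hj, if_neg, not_false_iff, add_zero]
    exact hle j
end
end
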